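/- arXiv:1801.00899 — 4 statements merged into one kernel-verified Lean document; each statement's English description precedes it below -/
import Mathlib

section
/- Let k₁ ∈ ℂ with Re(k₁) ≠ 0, p, r, σ, μ, λ ∈ ℝ with μ+λ ≠ 0 and 2/σ + 4p²r²/|p²+k₁²|² > 0 and p ≠ 0, p² + k₁² ≠ 0. Define η₁ = k₁ x + ((μ+λ)/k₁) t + η₁₀, a = 1/((k₁+conj k₁)² (2/σ + 4p²r²/|p²+k₁²|²)), g₁ = e^{η₁}, f = 1 + a e^{η₁ + conj η₁}. Then the bilinear equation D_x D_t (g₁·f) = (μ+λ) g₁ f holds identically in (x,t). -/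
/-!
Both `g₁` and the nonconstant part of `f` are plane waves `exp (k x + ω t + b)`, and for plane waves
`D_x D_t (e^{θ₁} · e^{θ₂}) = (k₁ - k₂) (ω₁ - ω₂) e^{θ₁ + θ₂}`. For `θ₂ = η₁ + conj η₁` the differences
are `-conj k₁` and `-conj ω₁`, whose product is `conj (μ + λ) = μ + λ`; the constant part of `f`
contributes `k₁ ω₁ = μ + λ` as well.
-/

/-- The Hirota bilinear operator `D_x D_t (g·f) = g_{xt} f - g_x f_t - g_t f_x + g f_{xt}`. -/
noncomputable def hirotaDxDt (g f : ℝ → ℝ → ℂ) (x t : ℝ) : ℂ :=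
  deriv (fun x' => deriv (fun t' => g x' t') t) x * f x t
  - deriv (fun x' => g x' t) x * deriv (fun t' => f x t') t
  - deriv (fun t' => g x t') t * deriv (fun x' => f x' t) x
  + g x t * deriv (fun x' => deriv (fun t' => f x' t') t) x

open ComplexConjugate

noncomputable def planeWave (k ω b : ℂ) (x t : ℝ) : ℂ :=
  Complex.exp (k * x + ω * t + b)

namespace planeWave

variable (k ω b : ℂ) (x t : ℝ)

theorem hasDerivAt_x : HasDerivAt (fun x => planeWave k ω b x t) (k * planeWave k ω b x t) x := by
  have := ((Complex.ofRealCLM.hasDerivAt (x := x)).const_mul k).add_const (ω * t + b)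
  simpa [planeWave, add_assoc, mul_comm] using this.cexp

theorem hasDerivAt_t : HasDerivAt (fun t => planeWave k ω b x t) (ω * planeWave k ω b x t) t := by
  have := ((Complex.ofRealCLM.hasDerivAt (x := t)).const_mul ω).const_add (k * x)
  simpa [planeWave, add_right_comm _ _ b, mul_comm] using this.add_const b |>.cexp

@[simp]
theorem deriv_x : deriv (fun x => planeWave k ω b x t) x = k * planeWave k ω b x t :=
  (hasDerivAt_x k ω b x t).deriv

@[simp]
theorem deriv_t : deriv (fun t => planeWave k ω b x t) t = ω * planeWave k ω b x t :=
  (hasDerivAt_t k ω b x t).deriv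

@[simp]
theorem differentiableAt_x : DifferentiableAt ℝ (fun x => planeWave k ω b x t) x :=
  (hasDerivAt_x k ω b x t).differentiableAt

@[simp]
theorem differentiableAt_t : DifferentiableAt ℝ (fun t => planeWave k ω b x t) t :=
  (hasDerivAt_t k ω b x t).differentiableAt

end planeWave

theorem hirotaDxDt_planeWave_const_add_mul (k ω b K M N α β : ℂ) (x t : ℝ) :
    hirotaDxDt (planeWave k ω b) (fun x t => α + β * planeWave K M N x t) x t
      = (α * (k * ω) + β * ((k - K) * (ω - M)) * planeWave K M N x t) * planeWave k ω b x t := by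
  simp only [hirotaDxDt, planeWave.deriv_t, planeWave.deriv_x, planeWave.differentiableAt_x,
    planeWave.differentiableAt_t, differentiableAt_const, DifferentiableAt.fun_mul, deriv_fun_add,
    deriv_fun_mul, deriv_const', zero_mul, zero_add]
  ring

theorem stmt4_general (k₁ η₁₀ : ℂ) (μ lam : ℝ)
    (hk : k₁.re ≠ 0)
    (a : ℂ)
    (η₁ : ℝ → ℝ → ℂ)
    (hη : ∀ x t : ℝ, η₁ x t = k₁ * x + (((μ + lam : ℝ) : ℂ) / k₁) * t + η₁₀)
    (g₁ f : ℝ → ℝ → ℂ)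
    (hg₁ : ∀ x t : ℝ, g₁ x t = Complex.exp (η₁ x t))
    (hf : ∀ x t : ℝ, f x t = 1 + a * Complex.exp (η₁ x t + (starRingEnd ℂ) (η₁ x t))) :
    ∀ x t : ℝ, hirotaDxDt g₁ f x t = ((μ + lam : ℝ) : ℂ) * g₁ x t * f x t := by
  intro x t
  have hk₁ : k₁ ≠ 0 := fun h => hk (by simp [h])
  set ω : ℂ := ((μ + lam : ℝ) : ℂ) / k₁
  have hg : g₁ = planeWave k₁ ω η₁₀ := by
    ext x t; rw [hg₁, hη, planeWave]
  have hf' :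
      f = fun x t => 1 + a * planeWave (k₁ + conj k₁) (ω + conj ω) (η₁₀ + conj η₁₀) x t := by
    ext x t; rw [hf, hη, planeWave]; simp only [map_add, map_mul, Complex.conj_ofReal]; ring_nf
  have hdisp : k₁ * ω = ((μ + lam : ℝ) : ℂ) := mul_div_cancel₀ _ hk₁
  have hcross :
      (k₁ - (k₁ + conj k₁)) * (ω - (ω + conj ω)) = ((μ + lam : ℝ) : ℂ) := by
    rw [sub_add_cancel_left, sub_add_cancel_left, neg_mul_neg, ← map_mul, hdisp,
      Complex.conj_ofReal]
  rw [hg, hf', hirotaDxDt_planeWave_const_add_mul, hdisp, hcross]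
  ring

/-- One-soliton verification of the first bilinear equation:
with `η₁ = k₁ x + ((μ+λ)/k₁) t + η₁₀`, `a = 1/((k₁+conj k₁)² (2/σ + 4p²r²/|p²+k₁²|²))`,
`g₁ = e^{η₁}`, `f = 1 + a e^{η₁ + conj η₁}`, one has `D_x D_t (g₁·f) = (μ+λ) g₁ f`. -/
theorem stmt4 (k₁ η₁₀ : ℂ) (p r σ μ lam : ℝ)
    (hk : k₁.re ≠ 0) (hml : μ + lam ≠ 0) (hp : p ≠ 0)
    (hpk : (p : ℂ) ^ 2 + k₁ ^ 2 ≠ 0)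
    (C : ℝ) (hC : C = 2 / σ + 4 * p ^ 2 * r ^ 2 / ‖(p : ℂ) ^ 2 + k₁ ^ 2‖ ^ 2)
    (hCpos : 0 < C)
    (a : ℂ) (ha : a = 1 / ((k₁ + (starRingEnd ℂ) k₁) ^ 2 * (C : ℂ)))
    (η₁ : ℝ → ℝ → ℂ)
    (hη : ∀ x t : ℝ, η₁ x t = k₁ * x + (((μ + lam : ℝ) : ℂ) / k₁) * t + η₁₀)
    (g₁ f : ℝ → ℝ → ℂ)
    (hg₁ : ∀ x t : ℝ, g₁ x t = Complex.exp (η₁ x t))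
    (hf : ∀ x t : ℝ, f x t = 1 + a * Complex.exp (η₁ x t + (starRingEnd ℂ) (η₁ x t))) :
    ∀ x t : ℝ, hirotaDxDt g₁ f x t = ((μ + lam : ℝ) : ℂ) * g₁ x t * f x t :=
  stmt4_general k₁ η₁₀ μ lam hk a η₁ hη g₁ f hg₁ hf
end

section
/- With the one-soliton data, the bilinear equation (D_x² + r²σ)(f·f) = σ(|g₁|² + |g₂|²) holds identically in (x,t), where D_x²(f·f) = 2(f_{xx}f - f_x²). -/
/-!
Write `E = exp (η₁ + conj η₁)` and `K = k₁ + conj k₁`. Then `f = 1 + a E`, `f_x = a K E` and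
`f_xx = a K² E`, and both sides of the bilinear equation are quadratic polynomials in `E`. The
constant terms agree, the `E²` terms agree because `|b| = 1`, and the `E` terms agree by the
dispersion relation `a (2K² + σ r² (2 - b - conj b)) = σ`. The latter holds because
`b = N / conj N` with `N = (k₁ - i p)(conj k₁ - i p)`, so that
`2 - b - conj b = -(N - conj N)² / |N|² = 4 p² K² / |p² + k₁²|²`, the term that the second
summand of `C` is built to absorb.
-/

open Complex ComplexConjugate

theorem Complex.two_sub_div_conj_add_conj {w : ℂ} (hw : w ≠ 0) :
    2 - (w / conj w + conj (w / conj w)) = -(w - conj w) ^ 2 / (w * conj w) := by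
  have hw' : conj w ≠ 0 := (map_ne_zero _).mpr hw
  rw [map_div₀, conj_conj]
  field_simp
  ring

theorem Complex.div_conj_mul_conj_div_conj {w : ℂ} (hw : w ≠ 0) :
    w / conj w * conj (w / conj w) = 1 := by
  have hw' : conj w ≠ 0 := (map_ne_zero _).mpr hw
  rw [map_div₀, conj_conj]
  field_simp

theorem Complex.mul_conj_ofReal_mul_exp_mul_I (r φ : ℝ) (u : ℂ) :
    r * exp (I * φ) * u * conj (r * exp (I * φ) * u) = r ^ 2 * (u * conj u) := by
  have h : exp (I * φ) * conj (exp (I * φ)) = 1 := by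
    rw [← exp_conj, ← exp_add]; simp
  simp only [map_mul, conj_ofReal]
  linear_combination (r : ℂ) ^ 2 * u * conj u * h

theorem Complex.conj_exp_add_conj (z : ℂ) : conj (exp (z + conj z)) = exp (z + conj z) := by
  rw [← exp_conj, map_add, conj_conj, add_comm]

theorem hasDerivAt_mul_cexp (a K c : ℂ) (x : ℝ) :
    HasDerivAt (fun u : ℝ => a * exp (K * u + c)) (a * K * exp (K * x + c)) x := by
  have h : HasDerivAt (fun u : ℝ => K * u + c) K x := by
    simpa using (ofRealCLM.hasDerivAt (x := x)).const_mul K |>.add_const c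
  simpa [mul_assoc, mul_comm K] using h.cexp.const_mul a

theorem deriv_one_add_mul_cexp (a K c : ℂ) :
    deriv (fun u : ℝ => 1 + a * exp (K * u + c)) = fun x : ℝ => a * K * exp (K * x + c) :=
  funext fun x => ((hasDerivAt_mul_cexp a K c x).const_add 1).deriv

theorem deriv_deriv_one_add_mul_cexp (a K c : ℂ) (x : ℝ) :
    deriv (fun y => deriv (fun u : ℝ => 1 + a * exp (K * u + c)) y) x
      = a * K ^ 2 * exp (K * x + c) := by
  rw [deriv_one_add_mul_cexp, (hasDerivAt_mul_cexp (a * K) K c x).deriv]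
  ring

theorem one_soliton_bilinear_identity {R : Type*} [CommRing R] {a b b' K r σ : R} (E : R)
    (hbb' : b * b' = 1) (hdisp : a * (2 * K ^ 2 + 2 * r ^ 2 * σ - σ * r ^ 2 * (b + b')) = σ) :
    2 * (a * K ^ 2 * E * (1 + a * E) - (a * K * E) ^ 2) + r ^ 2 * σ * (1 + a * E) ^ 2
      = σ * (E + r ^ 2 * ((1 + a * b * E) * (1 + a * b' * E))) := by
  linear_combination E * hdisp - σ * r ^ 2 * a ^ 2 * E ^ 2 * hbb'

section SolitonWave

variable (k : ℂ) (p : ℝ)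

theorem conj_soliton_numerator :
    conj ((k - I * p) * (conj k - I * p)) = (k + I * p) * (conj k + I * p) := by
  simp only [map_mul, map_sub, conj_conj, conj_I, conj_ofReal]
  ring

theorem soliton_numerator_mul_conj :
    (k - I * p) * (conj k - I * p) * conj ((k - I * p) * (conj k - I * p))
      = (p ^ 2 + k ^ 2) * conj (p ^ 2 + k ^ 2) := by
  rw [conj_soliton_numerator]
  simp only [map_add, map_pow, conj_ofReal]
  linear_combination (-(p : ℂ) ^ 2 * (k ^ 2 + conj k ^ 2) + (I ^ 2 - 1) * (p : ℂ) ^ 4) * I_sq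

theorem soliton_numerator_sub_conj :
    (k - I * p) * (conj k - I * p) - conj ((k - I * p) * (conj k - I * p))
      = -2 * I * p * (k + conj k) := by
  rw [conj_soliton_numerator]
  ring

noncomputable def solitonPhase : ℂ :=
  (k - I * p) * (conj k - I * p) / ((k + I * p) * (conj k + I * p))

theorem solitonPhase_eq_div_conj :
    solitonPhase k p = (k - I * p) * (conj k - I * p) / conj ((k - I * p) * (conj k - I * p)) := by
  rw [conj_soliton_numerator, solitonPhase]

end SolitonWave

section SolitonPhase

variable {k : ℂ} {p : ℝ}

theorem soliton_numerator_ne_zero (hz : (p : ℂ) ^ 2 + k ^ 2 ≠ 0) :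
    (k - I * p) * (conj k - I * p) ≠ 0 := by
  have h := soliton_numerator_mul_conj k p
  have : (p ^ 2 + k ^ 2) * conj ((p : ℂ) ^ 2 + k ^ 2) ≠ 0 := mul_ne_zero hz ((map_ne_zero _).mpr hz)
  exact left_ne_zero_of_mul (h ▸ this)

theorem solitonPhase_mul_conj (hz : (p : ℂ) ^ 2 + k ^ 2 ≠ 0) :
    solitonPhase k p * conj (solitonPhase k p) = 1 := by
  rw [solitonPhase_eq_div_conj]
  exact div_conj_mul_conj_div_conj (soliton_numerator_ne_zero hz)

theorem two_sub_solitonPhase_add_conj (hz : (p : ℂ) ^ 2 + k ^ 2 ≠ 0) :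
    2 - (solitonPhase k p + conj (solitonPhase k p))
      = 4 * p ^ 2 * (k + conj k) ^ 2 / (‖(p : ℂ) ^ 2 + k ^ 2‖ : ℂ) ^ 2 := by
  rw [solitonPhase_eq_div_conj, two_sub_div_conj_add_conj (soliton_numerator_ne_zero hz),
    soliton_numerator_sub_conj, soliton_numerator_mul_conj, mul_conj, normSq_eq_norm_sq]
  push_cast
  linear_combination (-4 * (p : ℂ) ^ 2 * (k + conj k) ^ 2 / (‖(p : ℂ) ^ 2 + k ^ 2‖ : ℂ) ^ 2) * I_sq

end SolitonPhase

theorem solitonPhase_dispersion {k : ℂ} {p r σ C : ℝ} (hk : k.re ≠ 0) (hσ : σ ≠ 0)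
    (hz : (p : ℂ) ^ 2 + k ^ 2 ≠ 0) (hC : C = 2 / σ + 4 * p ^ 2 * r ^ 2 / ‖(p : ℂ) ^ 2 + k ^ 2‖ ^ 2)
    (hC0 : C ≠ 0) :
    1 / ((k + conj k) ^ 2 * C) * (2 * (k + conj k) ^ 2 + 2 * r ^ 2 * σ
      - σ * r ^ 2 * (solitonPhase k p + conj (solitonPhase k p))) = σ := by
  have hK : k + conj k ≠ 0 := by
    rw [add_conj]; exact_mod_cast mul_ne_zero two_ne_zero hk
  have hnorm : (‖(p : ℂ) ^ 2 + k ^ 2‖ : ℂ) ≠ 0 := by exact_mod_cast norm_ne_zero_iff.mpr hz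
  have hσ' : (σ : ℂ) ≠ 0 := ofReal_ne_zero.mpr hσ
  have hC0' : (C : ℂ) ≠ 0 := ofReal_ne_zero.mpr hC0
  calc 1 / ((k + conj k) ^ 2 * C) * (2 * (k + conj k) ^ 2 + 2 * r ^ 2 * σ
        - σ * r ^ 2 * (solitonPhase k p + conj (solitonPhase k p)))
      = 1 / ((k + conj k) ^ 2 * C) * (2 * (k + conj k) ^ 2
        + σ * r ^ 2 * (2 - (solitonPhase k p + conj (solitonPhase k p)))) := by ring
    _ = 1 / ((k + conj k) ^ 2 * C) * (σ * (k + conj k) ^ 2 * C) := by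
      congr 1
      rw [two_sub_solitonPhase_add_conj hz, hC]
      push_cast
      field_simp
    _ = σ := by field_simp

theorem stmt6_general (k₁ η₁₀ : ℂ) (p r σ μ lam : ℝ)
    (hk : k₁.re ≠ 0) (hσ : σ ≠ 0)
    (hpk : (p : ℂ) ^ 2 + k₁ ^ 2 ≠ 0)
    (C : ℝ) (hC : C = 2 / σ + 4 * p ^ 2 * r ^ 2 / ‖(p : ℂ) ^ 2 + k₁ ^ 2‖ ^ 2)
    (hCpos : 0 < C)
    (a : ℂ) (ha : a = 1 / ((k₁ + (starRingEnd ℂ) k₁) ^ 2 * (C : ℂ)))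
    (b : ℂ) (hb : b = ((k₁ - Complex.I * p) * ((starRingEnd ℂ) k₁ - Complex.I * p)) /
      ((k₁ + Complex.I * p) * ((starRingEnd ℂ) k₁ + Complex.I * p)))
    (η₁ : ℝ → ℝ → ℂ)
    (hη : ∀ x t : ℝ, η₁ x t = k₁ * x + (((μ + lam : ℝ) : ℂ) / k₁) * t + η₁₀)
    (φ : ℝ → ℝ → ℝ)
    (g₁ g₂ f : ℝ → ℝ → ℂ)
    (hg₁ : ∀ x t : ℝ, g₁ x t = Complex.exp (η₁ x t))
    (hg₂ : ∀ x t : ℝ, g₂ x t = (r : ℂ) * Complex.exp (Complex.I * (φ x t : ℂ)) *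
      (1 + a * b * Complex.exp (η₁ x t + (starRingEnd ℂ) (η₁ x t))))
    (hf : ∀ x t : ℝ, f x t = 1 + a * Complex.exp (η₁ x t + (starRingEnd ℂ) (η₁ x t))) :
    ∀ x t : ℝ,
      2 * (deriv (fun x' => deriv (fun x'' => f x'' t) x') x * f x t
            - (deriv (fun x' => f x' t) x) ^ 2)
        + ((r ^ 2 * σ : ℝ) : ℂ) * (f x t) ^ 2
      = (σ : ℂ) * (g₁ x t * (starRingEnd ℂ) (g₁ x t) + g₂ x t * (starRingEnd ℂ) (g₂ x t)) := by
  have hb_phase : b = solitonPhase k₁ p := hb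
  have hdisp := solitonPhase_dispersion (r := r) hk hσ hpk hC hCpos.ne'
  rw [← ha, ← hb_phase] at hdisp
  intro x t
  set K := k₁ + conj k₁
  set c := η₁ 0 t + conj (η₁ 0 t)
  have hexp (y : ℝ) : η₁ y t + conj (η₁ y t) = K * y + c := by
    have : η₁ y t = k₁ * y + η₁ 0 t := by rw [hη, hη]; push_cast; ring
    rw [this, map_add, map_mul, conj_ofReal]
    ring
  have hfK : (fun y => f y t) = fun y : ℝ => 1 + a * exp (K * y + c) := by
    funext y; rw [hf, hexp]
  have ha_conj : conj a = a := by
    rw [ha, map_div₀, map_one, map_mul, map_pow, map_add, conj_conj, add_comm (conj k₁),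
      conj_ofReal]
  rw [hfK, deriv_deriv_one_add_mul_cexp, deriv_one_add_mul_cexp, hf, hg₁, hg₂,
    mul_conj_ofReal_mul_exp_mul_I, ← exp_conj, ← exp_add, map_add, map_one, map_mul, map_mul,
    ha_conj, conj_exp_add_conj, hexp]
  push_cast
  exact one_soliton_bilinear_identity _ (hb_phase ▸ solitonPhase_mul_conj hpk) hdisp

/-- One-soliton verification of the bilinear equation
`(D_x² + r²σ)(f·f) = σ(|g₁|² + |g₂|²)`, where `D_x²(f·f) = 2(f_{xx}f - f_x²)`. -/
theorem stmt6 (k₁ η₁₀ : ℂ) (p r σ μ lam φ₀ : ℝ)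
    (hk : k₁.re ≠ 0) (hσ : σ ≠ 0) (hp : p ≠ 0)
    (hpk : (p : ℂ) ^ 2 + k₁ ^ 2 ≠ 0)
    (C : ℝ) (hC : C = 2 / σ + 4 * p ^ 2 * r ^ 2 / ‖(p : ℂ) ^ 2 + k₁ ^ 2‖ ^ 2)
    (hCpos : 0 < C)
    (a : ℂ) (ha : a = 1 / ((k₁ + (starRingEnd ℂ) k₁) ^ 2 * (C : ℂ)))
    (b : ℂ) (hb : b = ((k₁ - Complex.I * p) * ((starRingEnd ℂ) k₁ - Complex.I * p)) /
      ((k₁ + Complex.I * p) * ((starRingEnd ℂ) k₁ + Complex.I * p)))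
    (η₁ : ℝ → ℝ → ℂ)
    (hη : ∀ x t : ℝ, η₁ x t = k₁ * x + (((μ + lam : ℝ) : ℂ) / k₁) * t + η₁₀)
    (φ : ℝ → ℝ → ℝ)
    (hφ : ∀ x t : ℝ, φ x t = p * x - ((μ + lam) / p) * t + φ₀)
    (g₁ g₂ f : ℝ → ℝ → ℂ)
    (hg₁ : ∀ x t : ℝ, g₁ x t = Complex.exp (η₁ x t))
    (hg₂ : ∀ x t : ℝ, g₂ x t = (r : ℂ) * Complex.exp (Complex.I * (φ x t : ℂ)) *
      (1 + a * b * Complex.exp (η₁ x t + (starRingEnd ℂ) (η₁ x t))))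
    (hf : ∀ x t : ℝ, f x t = 1 + a * Complex.exp (η₁ x t + (starRingEnd ℂ) (η₁ x t))) :
    ∀ x t : ℝ,
      2 * (deriv (fun x' => deriv (fun x'' => f x'' t) x') x * f x t
            - (deriv (fun x' => f x' t) x) ^ 2)
        + ((r ^ 2 * σ : ℝ) : ℂ) * (f x t) ^ 2
      = (σ : ℂ) * (g₁ x t * (starRingEnd ℂ) (g₁ x t) + g₂ x t * (starRingEnd ℂ) (g₂ x t)) :=
  stmt6_general k₁ η₁₀ p r σ μ lam hk hσ hpk C hC hCpos a ha b hb η₁ hη φ g₁ g₂ f hg₁ hg₂ hf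
end

section
/- Compatibility relation of the AB system: if A, B : ℝ² → ℂ are smooth with A_{xt} = μA - AB and B_x = σ(|A|²)_t, then ∂_x(2σ|A_t|² + B² - 2μB) = 0, i.e., 2σ|A_t|² + B² - 2μB is a function of t alone. -/
open Complex

/-- Derivative of `normSq ∘ f`. -/
lemma hasDerivAt_normSq_comp {f : ℝ → ℂ} {f' : ℂ} {x : ℝ} (hf : HasDerivAt f f' x) :
    HasDerivAt (fun y => Complex.normSq (f y))
      (2 * ((f x).re * f'.re + (f x).im * f'.im)) x := by
  have hre : HasDerivAt (fun y => (f y).re) f'.re x :=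
    (Complex.reCLM.hasFDerivAt.comp_hasDerivAt x hf)
  have him : HasDerivAt (fun y => (f y).im) f'.im x :=
    (Complex.imCLM.hasFDerivAt.comp_hasDerivAt x hf)
  have h := (hre.mul hre).add (him.mul him)
  have hfun : (fun y => Complex.normSq (f y))
      = fun y => (f y).re * (f y).re + (f y).im * (f y).im := by
    funext y; simp [Complex.normSq_apply]
  rw [hfun]
  refine h.congr_deriv ?_
  ring

/-- Compatibility relation of the AB system: if `A_{xt} = μA - AB` and `B_x = σ(|A|²)_t`,
then `∂_x(2σ|A_t|² + B² - 2μB) = 0`. -/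
theorem stmt14 (A : ℝ → ℝ → ℂ) (B : ℝ → ℝ → ℝ) (μ σ : ℝ)
    (hA : ContDiff ℝ (⊤ : ℕ∞) (Function.uncurry A)) (hB : ContDiff ℝ (⊤ : ℕ∞) (Function.uncurry B))
    (heq1 : ∀ x t : ℝ,
      deriv (fun x' => deriv (fun t' => A x' t') t) x
        = (μ : ℂ) * A x t - A x t * ((B x t : ℝ) : ℂ))
    (heq2 : ∀ x t : ℝ,
      deriv (fun x' => B x' t) x = σ * deriv (fun t' => Complex.normSq (A x t')) t) :
    ∀ x t : ℝ,
      deriv (fun x' =>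
        2 * σ * Complex.normSq (deriv (fun t' => A x' t') t)
          + (B x' t) ^ 2 - 2 * μ * B x' t) x = 0 := by
  intro x t
  -- joint smoothness of g := ∂ₜ A
  set g : ℝ → ℝ → ℂ := fun x t => deriv (fun t' => A x t') t with hgdef
  have hg : ContDiff ℝ (⊤ : ℕ∞) (fun p : ℝ × ℝ => g p.1 p.2) := by
    have h1 : ContDiff ℝ (⊤ : ℕ∞) (Function.uncurry fun (p : ℝ × ℝ) (s : ℝ) => A p.1 s) :=
      hA.comp (contDiff_fst.fst.prodMk contDiff_snd)
    have h2 := h1.fderiv_apply (n := (⊤ : ℕ∞)) (g := fun p : ℝ × ℝ => p.2)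
      (k := fun _ : ℝ × ℝ => (1 : ℝ)) contDiff_snd contDiff_const (by simp)
    have : (fun p : ℝ × ℝ => g p.1 p.2)
        = fun p : ℝ × ℝ => fderiv ℝ (fun s => A p.1 s) p.2 1 := by
      funext p
      simp [hgdef, fderiv_apply_one_eq_deriv]
    rw [this]
    exact h2
  -- differentiability of the slices
  have hAt : ∀ x' t', HasDerivAt (fun t' => A x' t') (g x' t') t' := by
    intro x' t'
    have hdiff : Differentiable ℝ (fun t' => A x' t') :=
      (hA.comp ((contDiff_const.prodMk contDiff_id))).differentiable (by simp)
    exact (hdiff t').hasDerivAt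
  have hgx : HasDerivAt (fun x' => g x' t)
      ((μ : ℂ) * A x t - A x t * ((B x t : ℝ) : ℂ)) x := by
    have hdiff : Differentiable ℝ (fun x' => g x' t) :=
      (hg.comp ((contDiff_id.prodMk contDiff_const))).differentiable (by simp)
    have := (hdiff x).hasDerivAt
    rwa [show deriv (fun x' => g x' t) x = (μ : ℂ) * A x t - A x t * ((B x t : ℝ) : ℂ)
      from heq1 x t] at this
  have hBx : HasDerivAt (fun x' => B x' t)
      (σ * (2 * ((A x t).re * (g x t).re + (A x t).im * (g x t).im))) x := by
    have hdiff : Differentiable ℝ (fun x' => B x' t) :=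
      (hB.comp ((contDiff_id.prodMk contDiff_const))).differentiable (by simp)
    have h1 := (hdiff x).hasDerivAt
    have h2 : deriv (fun t' => Complex.normSq (A x t')) t
        = 2 * ((A x t).re * (g x t).re + (A x t).im * (g x t).im) :=
      (hasDerivAt_normSq_comp (hAt x t)).deriv
    rwa [heq2 x t, h2] at h1
  -- the full derivative
  have hnsq : HasDerivAt (fun x' => Complex.normSq (g x' t))
      (2 * ((g x t).re * ((μ : ℂ) * A x t - A x t * ((B x t : ℝ) : ℂ)).re
        + (g x t).im * ((μ : ℂ) * A x t - A x t * ((B x t : ℝ) : ℂ)).im)) x :=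
    hasDerivAt_normSq_comp hgx
  have htotal : HasDerivAt (fun x' =>
      2 * σ * Complex.normSq (g x' t) + (B x' t) ^ 2 - 2 * μ * B x' t)
      (2 * σ * (2 * ((g x t).re * ((μ : ℂ) * A x t - A x t * ((B x t : ℝ) : ℂ)).re
        + (g x t).im * ((μ : ℂ) * A x t - A x t * ((B x t : ℝ) : ℂ)).im))
        + 2 * B x t * (σ * (2 * ((A x t).re * (g x t).re + (A x t).im * (g x t).im)))
        - 2 * μ * (σ * (2 * ((A x t).re * (g x t).re + (A x t).im * (g x t).im)))) x := by
    have h1 := (hnsq.const_mul (2 * σ)).add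
      ((hBx.pow 2).sub (hBx.const_mul (2 * μ)))
    have e : (fun x' => 2 * σ * Complex.normSq (g x' t) + (B x' t) ^ 2 - 2 * μ * B x' t)
        = (fun y => 2 * σ * normSq (g y t)) + ((fun x' => B x' t) ^ 2 - fun y => 2 * μ * B y t) := by
      funext x'; simp only [Pi.add_apply, Pi.sub_apply, Pi.pow_apply]; ring
    rw [e]
    refine h1.congr_deriv ?_
    simp only [Nat.reduceSub, Nat.cast_ofNat, pow_one]
    ring
  rw [htotal.deriv]
  simp only [Complex.sub_re, Complex.sub_im, Complex.mul_re, Complex.mul_im,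
    Complex.ofReal_re, Complex.ofReal_im]
  ring
end

section
/- Equivalence of nonlinear and bilinear forms: suppose f : ℝ² → ℝ and g₁, g₂ : ℝ² → ℂ are smooth, f nowhere zero, and they satisfy D_x D_t(g_j·f) = (μ+λ)g_j f for j = 1,2 and (D_x² + r²σ)(f·f) = σ(|g₁|²+|g₂|²). Then A_j = g_j/f and B = 2(ln f)_{xt} - λ satisfy A_{j,xt} = μA_j - A_j B for j = 1,2 and B_x = σ(|A₁|²+|A₂|²)_t. -/
open Function in
noncomputable def pd {E : Type*} [NormedAddCommGroup E] [NormedSpace ℝ E]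
    (v : ℝ × ℝ) (F : ℝ × ℝ → E) : ℝ × ℝ → E := fun p => fderiv ℝ F p v

lemma pd_contDiff {E : Type*} [NormedAddCommGroup E] [NormedSpace ℝ E]
    (v : ℝ × ℝ) {F : ℝ × ℝ → E} (hF : ContDiff ℝ (⊤ : ℕ∞) F) :
    ContDiff ℝ (⊤ : ℕ∞) (pd v F) :=
  (hF.fderiv_right (by simp)).clm_apply contDiff_const

lemma hasDerivAt_pd_fst {E : Type*} [NormedAddCommGroup E] [NormedSpace ℝ E]
    {F : ℝ × ℝ → E} (hF : ContDiff ℝ (⊤ : ℕ∞) F) (x t : ℝ) :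
    HasDerivAt (fun x' => F (x', t)) (pd (1, 0) F (x, t)) x := by
  have h1 : HasDerivAt (fun x' : ℝ => ((x' : ℝ), t)) ((1 : ℝ), (0 : ℝ)) x :=
    (hasDerivAt_id x).prodMk (hasDerivAt_const x t)
  exact (hF.differentiable (by simp) (x, t)).hasFDerivAt.comp_hasDerivAt x h1

lemma hasDerivAt_pd_snd {E : Type*} [NormedAddCommGroup E] [NormedSpace ℝ E]
    {F : ℝ × ℝ → E} (hF : ContDiff ℝ (⊤ : ℕ∞) F) (x t : ℝ) :
    HasDerivAt (fun t' => F (x, t')) (pd (0, 1) F (x, t)) t := by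
  have h1 : HasDerivAt (fun t' : ℝ => ((x : ℝ), t')) ((0 : ℝ), (1 : ℝ)) t :=
    (hasDerivAt_const t x).prodMk (hasDerivAt_id t)
  exact (hF.differentiable (by simp) (x, t)).hasFDerivAt.comp_hasDerivAt t h1

lemma pd_comm {E : Type*} [NormedAddCommGroup E] [NormedSpace ℝ E]
    {F : ℝ × ℝ → E} (hF : ContDiff ℝ (⊤ : ℕ∞) F) (v w : ℝ × ℝ) (p : ℝ × ℝ) :
    pd v (pd w F) p = pd w (pd v F) p := by
  have hdf : Differentiable ℝ (fderiv ℝ F) :=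
    (hF.fderiv_right ((by exact WithTop.coe_le_coe.2 le_top) : (1 : WithTop ℕ∞) + 1 ≤ _)).differentiable (by simp)
  have hsym := second_derivative_symmetric (f := F) (f' := fderiv ℝ F)
    (f'' := fderiv ℝ (fderiv ℝ F) p) (x := p)
    (fun y => (hF.differentiable (by simp) y).hasFDerivAt) (hdf p).hasFDerivAt
  have key : ∀ u z : ℝ × ℝ, pd u (pd z F) p = fderiv ℝ (fderiv ℝ F) p u z := by
    intro u z
    show fderiv ℝ (fun q => fderiv ℝ F q z) p u = _
    rw [fderiv_clm_apply (hdf p) (differentiableAt_const z)]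
    simp
  rw [key, key, hsym]

/-- Equivalence of nonlinear and bilinear forms of the two-component AB system:
if `D_x D_t(g_j·f) = (μ+λ)g_j f` for `j = 1,2` and `(D_x² + r²σ)(f·f) = σ(|g₁|²+|g₂|²)`,
then `A_j = g_j/f` and `B = 2(ln f)_{xt} - λ` satisfy `A_{j,xt} = μA_j - A_j B` and
`B_x = σ(|A₁|²+|A₂|²)_t`. -/
theorem stmt15 (f : ℝ → ℝ → ℝ) (g₁ g₂ : ℝ → ℝ → ℂ) (μ lam r σ : ℝ)
    (hf : ContDiff ℝ (⊤ : ℕ∞) (Function.uncurry f))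
    (hg₁ : ContDiff ℝ (⊤ : ℕ∞) (Function.uncurry g₁))
    (hg₂ : ContDiff ℝ (⊤ : ℕ∞) (Function.uncurry g₂))
    (hfne : ∀ x t, f x t ≠ 0)
    (hbil : ∀ g, (g = g₁ ∨ g = g₂) → ∀ x t : ℝ,
      deriv (fun x' => deriv (fun t' => g x' t') t) x * ((f x t : ℝ) : ℂ)
        - deriv (fun x' => g x' t) x * ((deriv (fun t' => f x t') t : ℝ) : ℂ)
        - deriv (fun t' => g x t') t * ((deriv (fun x' => f x' t) x : ℝ) : ℂ)
        + g x t * ((deriv (fun x' => deriv (fun t' => f x' t') t) x : ℝ) : ℂ)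
      = ((μ + lam : ℝ) : ℂ) * g x t * ((f x t : ℝ) : ℂ))
    (hbil2 : ∀ x t : ℝ,
      2 * (deriv (fun x' => deriv (fun x'' => f x'' t) x') x * f x t
            - (deriv (fun x' => f x' t) x) ^ 2)
        + r ^ 2 * σ * (f x t) ^ 2
      = σ * (Complex.normSq (g₁ x t) + Complex.normSq (g₂ x t)))
    (B : ℝ → ℝ → ℝ)
    (hBdef : ∀ x t : ℝ,
      B x t = 2 * ((deriv (fun x' => deriv (fun t' => f x' t') t) x * f x t
        - deriv (fun x' => f x' t) x * deriv (fun t' => f x t') t) / (f x t) ^ 2) - lam) :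
    (∀ g, (g = g₁ ∨ g = g₂) → ∀ x t : ℝ,
      deriv (fun x' => deriv (fun t' => g x' t' / ((f x' t' : ℝ) : ℂ)) t) x
        = (μ : ℂ) * (g x t / ((f x t : ℝ) : ℂ))
          - (g x t / ((f x t : ℝ) : ℂ)) * ((B x t : ℝ) : ℂ)) ∧
    (∀ x t : ℝ,
      deriv (fun x' => B x' t) x
        = σ * deriv (fun t' =>
            Complex.normSq (g₁ x t' / ((f x t' : ℝ) : ℂ))
              + Complex.normSq (g₂ x t' / ((f x t' : ℝ) : ℂ))) t) := by
  set F := Function.uncurry f with hFdef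
  have eFt : ∀ a b : ℝ, deriv (fun t' => f a t') b = pd (0,1) F (a, b) :=
    fun a b => (hasDerivAt_pd_snd hf a b).deriv
  have eFx : ∀ a b : ℝ, deriv (fun x' => f x' b) a = pd (1,0) F (a, b) :=
    fun a b => (hasDerivAt_pd_fst hf a b).deriv
  have eFxt : ∀ a b : ℝ, deriv (fun x' => pd (0,1) F (x', b)) a = pd (1,0) (pd (0,1) F) (a, b) :=
    fun a b => (hasDerivAt_pd_fst (pd_contDiff _ hf) a b).deriv
  have eFxx : ∀ a b : ℝ, deriv (fun x' => pd (1,0) F (x', b)) a = pd (1,0) (pd (1,0) F) (a, b) :=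
    fun a b => (hasDerivAt_pd_fst (pd_contDiff _ hf) a b).deriv
  constructor
  · -- Part 1
    intro g hg x t
    have hgC : ContDiff ℝ (⊤ : ℕ∞) (Function.uncurry g) := by rcases hg with h | h <;> subst h <;> assumption
    set G := Function.uncurry g with hGdef
    have eGt : ∀ a b : ℝ, deriv (fun t' => g a t') b = pd (0,1) G (a, b) :=
      fun a b => (hasDerivAt_pd_snd hgC a b).deriv
    have eGxt : ∀ a b : ℝ, deriv (fun x' => pd (0,1) G (x', b)) a = pd (1,0) (pd (0,1) G) (a, b) :=
      fun a b => (hasDerivAt_pd_fst (pd_contDiff _ hgC) a b).deriv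
    have eGx : ∀ a b : ℝ, deriv (fun x' => g x' b) a = pd (1,0) G (a, b) :=
      fun a b => (hasDerivAt_pd_fst hgC a b).deriv
    have hb := hbil g hg x t
    simp only [eFt, eFx, eGt, eGx, eFxt, eGxt] at hb
    have hBxt := hBdef x t
    simp only [eFt, eFx, eFxt] at hBxt
    have hne : ∀ a b : ℝ, ((f a b : ℝ) : ℂ) ≠ 0 := fun a b => Complex.ofReal_ne_zero.2 (hfne a b)
    have einner : ∀ x' : ℝ, deriv (fun t' => g x' t' / ((f x' t' : ℝ) : ℂ)) t
        = (pd (0,1) G (x', t) * ((f x' t : ℝ) : ℂ)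
            - g x' t * ((pd (0,1) F (x', t) : ℝ) : ℂ)) / ((f x' t : ℝ) : ℂ) ^ 2 := by
      intro x'
      exact ((hasDerivAt_pd_snd hgC x' t).div
        ((hasDerivAt_pd_snd hf x' t).ofReal_comp) (hne x' t)).deriv
    rw [show (fun x' => deriv (fun t' => g x' t' / ((f x' t' : ℝ) : ℂ)) t)
        = fun x' => (pd (0,1) G (x', t) * ((f x' t : ℝ) : ℂ)
            - g x' t * ((pd (0,1) F (x', t) : ℝ) : ℂ)) / ((f x' t : ℝ) : ℂ) ^ 2
      from funext einner]
    have h1 : HasDerivAt (fun x' => pd (0,1) G (x', t)) (pd (1,0) (pd (0,1) G) (x, t)) x :=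
      hasDerivAt_pd_fst (pd_contDiff _ hgC) x t
    have h2 : HasDerivAt (fun x' => ((f x' t : ℝ) : ℂ)) ((pd (1,0) F (x, t) : ℝ) : ℂ) x :=
      (hasDerivAt_pd_fst hf x t).ofReal_comp
    have h3 : HasDerivAt (fun x' => g x' t) (pd (1,0) G (x, t)) x :=
      hasDerivAt_pd_fst hgC x t
    have h4 : HasDerivAt (fun x' => ((pd (0,1) F (x', t) : ℝ) : ℂ))
        ((pd (1,0) (pd (0,1) F) (x, t) : ℝ) : ℂ) x :=
      (hasDerivAt_pd_fst (pd_contDiff _ hf) x t).ofReal_comp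
    have hN := (h1.mul h2).sub (h3.mul h4)
    have hD := h2.mul h2
    simp only [← pow_two] at hD
    have hQ := hN.div hD (pow_ne_zero 2 (hne x t))
    simp only [Pi.mul_def, Pi.sub_def, Pi.div_def, Pi.pow_def] at hQ
    rw [hQ.deriv, hBxt]
    push_cast
    have hfne' : (f x t : ℂ) ≠ 0 := hne x t
    field_simp
    ring_nf
    push_cast at hb
    ring_nf at hb
    linear_combination (((f x t : ℝ):ℂ)) * hb
  · -- Part 2
    intro x t
    have hBfun : (fun x' => B x' t) = fun x' =>
        2 * ((pd (1,0) (pd (0,1) F) (x', t) * f x' t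
          - pd (1,0) F (x', t) * pd (0,1) F (x', t)) / (f x' t) ^ 2) - lam := by
      funext x'
      rw [hBdef x' t]
      simp only [eFt, eFx, eFxt]
    rw [hBfun]
    have hA : HasDerivAt (fun x' => pd (1,0) (pd (0,1) F) (x', t))
        (pd (1,0) (pd (1,0) (pd (0,1) F)) (x, t)) x :=
      hasDerivAt_pd_fst (pd_contDiff _ (pd_contDiff _ hf)) x t
    have hB2 : HasDerivAt (fun x' => f x' t) (pd (1,0) F (x, t)) x := hasDerivAt_pd_fst hf x t
    have hC : HasDerivAt (fun x' => pd (1,0) F (x', t)) (pd (1,0) (pd (1,0) F) (x, t)) x :=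
      hasDerivAt_pd_fst (pd_contDiff _ hf) x t
    have hD2 : HasDerivAt (fun x' => pd (0,1) F (x', t)) (pd (1,0) (pd (0,1) F) (x, t)) x :=
      hasDerivAt_pd_fst (pd_contDiff _ hf) x t
    have hnum := (hA.mul hB2).sub (hC.mul hD2)
    have hden := hB2.mul hB2
    simp only [← pow_two] at hden
    have hq := hnum.div hden (pow_ne_zero 2 (hfne x t))
    have hL := (hq.const_mul (2:ℝ)).sub_const lam
    simp only [Pi.mul_def, Pi.sub_def, Pi.div_def, Pi.pow_def] at hL
    rw [hL.deriv]
    have hval : (fun t' : ℝ => σ * (Complex.normSq (g₁ x t' / ((f x t' : ℝ) : ℂ))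
        + Complex.normSq (g₂ x t' / ((f x t' : ℝ) : ℂ))))
        = fun t' => 2 * ((pd (1,0) (pd (1,0) F) (x, t') * f x t'
            - (pd (1,0) F (x, t')) ^ 2) / (f x t') ^ 2) + r ^ 2 * σ := by
      funext t'
      have h2 := hbil2 x t'
      simp only [eFx, eFxx] at h2
      rw [Complex.normSq_div, Complex.normSq_div, Complex.normSq_ofReal]
      have hne := hfne x t'
      field_simp
      linear_combination (-1) * h2
    rw [show σ * deriv (fun t' => Complex.normSq (g₁ x t' / ((f x t' : ℝ) : ℂ))
          + Complex.normSq (g₂ x t' / ((f x t' : ℝ) : ℂ))) t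
        = deriv (fun t' => σ * (Complex.normSq (g₁ x t' / ((f x t' : ℝ) : ℂ))
          + Complex.normSq (g₂ x t' / ((f x t' : ℝ) : ℂ)))) t
      from (deriv_const_mul_field σ).symm, hval]
    have ha : HasDerivAt (fun t' => pd (1,0) (pd (1,0) F) (x, t'))
        (pd (0,1) (pd (1,0) (pd (1,0) F)) (x, t)) t :=
      hasDerivAt_pd_snd (pd_contDiff _ (pd_contDiff _ hf)) x t
    have hb : HasDerivAt (fun t' => f x t') (pd (0,1) F (x, t)) t := hasDerivAt_pd_snd hf x t
    have hc : HasDerivAt (fun t' => pd (1,0) F (x, t')) (pd (0,1) (pd (1,0) F) (x, t)) t :=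
      hasDerivAt_pd_snd (pd_contDiff _ hf) x t
    have hcc := hc.mul hc
    simp only [← pow_two] at hcc
    have hnum2 := (ha.mul hb).sub hcc
    have hden2 := hb.mul hb
    simp only [← pow_two] at hden2
    have hq2 := hnum2.div hden2 (pow_ne_zero 2 (hfne x t))
    have hR := (hq2.const_mul (2:ℝ)).add_const (r ^ 2 * σ)
    simp only [Pi.mul_def, Pi.sub_def, Pi.div_def, Pi.pow_def] at hR
    rw [hR.deriv]
    have e1 : pd (0,1) (pd (1,0) F) = pd (1,0) (pd (0,1) F) := funext (pd_comm hf _ _)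
    have e2 : pd (0,1) (pd (1,0) (pd (1,0) F)) (x, t)
        = pd (1,0) (pd (1,0) (pd (0,1) F)) (x, t) := by
      rw [pd_comm (pd_contDiff _ hf) (0,1) (1,0) (x,t), e1]
    rw [e1, e2]
    have hne := hfne x t
    field_simp
    ring
end
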